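/- Let d ≥ 1, let 0 < ε_s ≤ ε_t/d and λ_r > 0, and let M_1, …, M_k be real symmetric positive semidefinite d×d matrices such that for every t ∈ {1, …, k} there exists x_t ∈ ℝ^d with x_t^T M_t x_t ≥ ε_t and x_t^T (λ_r·I + Σ_{j<t} M_j) x_t ≤ ε_s. Then for every t ∈ {1, …, k}, det(λ_r·I + Σ_{j≤t} M_j) ≥ 2^{t−1} · λ_r^d. -/

import Mathlib

/-!
Write `A_t = λ_r I + ∑_{j<t} M_j`. The hypotheses give a vector `x ≠ 0` with
`xᵀ A_t x ≤ ε_s ≤ ε_t ≤ xᵀ M_t x`. Changing coordinates so that `A_t = CᵀC` becomes the identity,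
`det (A_t + M_t) = det A_t · det (1 + S)` with `S = C⁻ᵀ M_t C⁻¹` positive semidefinite, and
`yᵀ y ≤ yᵀ S y` for `y = C x`. Since a Rayleigh quotient of `S` is at most `tr S`, we get
`tr S ≥ 1`, hence `det (1 + S) = ∏ (1 + μ_i) ≥ 1 + ∑ μ_i ≥ 2` over the eigenvalues `μ_i ≥ 0`
of `S`. So each step at least doubles the determinant, starting from `det (λ_r I) = λ_r ^ d`.
-/

open Matrix Finset
open scoped MatrixOrder

theorem Finset.one_add_sum_le_prod_one_add {ι R : Type*} [CommSemiring R] [PartialOrder R]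
    [IsOrderedRing R] (s : Finset ι) {f : ι → R} (hf : ∀ i ∈ s, 0 ≤ f i) :
    1 + ∑ i ∈ s, f i ≤ ∏ i ∈ s, (1 + f i) := by
  induction s using Finset.cons_induction with
  | empty => simp
  | cons a s ha ih =>
    rw [forall_mem_cons] at hf
    have hsum : 0 ≤ ∑ i ∈ s, f i := sum_nonneg hf.2
    calc 1 + ∑ i ∈ cons a s ha, f i = 1 + f a + ∑ i ∈ s, f i + 0 := by rw [sum_cons]; ring
      _ ≤ 1 + f a + ∑ i ∈ s, f i + f a * ∑ i ∈ s, f i := by gcongr; exact mul_nonneg hf.1 hsum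
      _ = (1 + f a) * (1 + ∑ i ∈ s, f i) := by ring
      _ ≤ ∏ i ∈ cons a s ha, (1 + f i) := by
          rw [prod_cons]; exact mul_le_mul_of_nonneg_left (ih hf.2) (add_nonneg zero_le_one hf.1)

variable {n : Type*} [Fintype n]

namespace Matrix

theorem dotProduct_transpose_mul_mul_mulVec (C N : Matrix n n ℝ) (x : n → ℝ) :
    x ⬝ᵥ (Cᵀ * N * C) *ᵥ x = (C *ᵥ x) ⬝ᵥ N *ᵥ (C *ᵥ x) := by
  rw [← mulVec_mulVec, ← mulVec_mulVec, dotProduct_mulVec, vecMul_transpose]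

variable [DecidableEq n]

theorem IsHermitian.det_one_add {S : Matrix n n ℝ} (hS : S.IsHermitian) :
    (1 + S).det = ∏ i, (1 + hS.eigenvalues i) := by
  have h : 1 + S = cfc (fun x : ℝ => 1 + x) S := by
    rw [cfc_add .., cfc_const_one .., cfc_id' ..]
  rw [h, hS.cfc_eq]
  simp [IsHermitian.cfc, -Unitary.conjStarAlgAut_apply]

theorem PosSemidef.one_add_trace_le_det_one_add {S : Matrix n n ℝ} (hS : S.PosSemidef) :
    1 + S.trace ≤ (1 + S).det := by
  rw [hS.1.det_one_add, hS.1.trace_eq_sum_eigenvalues]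
  exact one_add_sum_le_prod_one_add _ fun i _ => hS.eigenvalues_nonneg i

theorem PosSemidef.dotProduct_mulVec_le_trace_mul {S : Matrix n n ℝ} (hS : S.PosSemidef)
    (y : n → ℝ) : y ⬝ᵥ S *ᵥ y ≤ S.trace * (y ⬝ᵥ y) := by
  obtain ⟨C, rfl⟩ := CStarAlgebra.nonneg_iff_eq_star_mul_self.mp hS.nonneg
  rw [star_eq_conjTranspose, conjTranspose_eq_transpose_of_trivial]
  have hquad : y ⬝ᵥ (Cᵀ * C) *ᵥ y = ∑ i, (C *ᵥ y) i ^ 2 := by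
    rw [← mulVec_mulVec, dotProduct_mulVec, vecMul_transpose]; simp [dotProduct, sq]
  have htrace : (Cᵀ * C).trace = ∑ i, ∑ j, C i j ^ 2 := by
    simp only [trace, diag, mul_apply, transpose_apply, sq]; exact sum_comm
  -- Cauchy–Schwarz, row by row
  have hrow (i : n) : (C *ᵥ y) i ^ 2 ≤ (∑ j, C i j ^ 2) * (y ⬝ᵥ y) := by
    simpa [mulVec, dotProduct, sq] using sum_mul_sq_le_sq_mul_sq univ (C i) y
  rw [hquad, htrace, sum_mul]
  exact sum_le_sum fun i _ => hrow i

theorem PosSemidef.two_le_det_one_add {S : Matrix n n ℝ} (hS : S.PosSemidef) {y : n → ℝ}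
    (hy : y ≠ 0) (hyS : y ⬝ᵥ y ≤ y ⬝ᵥ S *ᵥ y) : 2 ≤ (1 + S).det := by
  have hyy : 0 < y ⬝ᵥ y := by simpa using dotProduct_star_self_pos_iff.mpr hy
  have htrace : 1 ≤ S.trace := by
    nlinarith [hS.dotProduct_mulVec_le_trace_mul y]
  linarith [hS.one_add_trace_le_det_one_add]

theorem PosDef.two_mul_det_le_det_add {A M : Matrix n n ℝ} (hA : A.PosDef) (hM : M.PosSemidef)
    {x : n → ℝ} (hx : x ≠ 0) (hxM : x ⬝ᵥ A *ᵥ x ≤ x ⬝ᵥ M *ᵥ x) : 2 * A.det ≤ (A + M).det := by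
  -- Write `A = Cᵀ C`; in the coordinates `y = C x` the form `A` becomes the identity.
  obtain ⟨C, rfl⟩ := CStarAlgebra.nonneg_iff_eq_star_mul_self.mp hA.posSemidef.nonneg
  rw [star_eq_conjTranspose, conjTranspose_eq_transpose_of_trivial] at *
  have hdetA := hA.det_pos
  have hC : IsUnit C.det := by
    rw [det_mul, det_transpose] at hdetA
    exact isUnit_iff_ne_zero.mpr fun h => by simp [h] at hdetA
  set S := C⁻¹ᵀ * M * C⁻¹
  have hS : S.PosSemidef := by
    simpa [conjTranspose_eq_transpose_of_trivial] using hM.conjTranspose_mul_mul_same C⁻¹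
  have hM_eq : M = Cᵀ * S * C := by
    simp only [S, Matrix.mul_assoc]
    rw [nonsing_inv_mul C hC, Matrix.mul_one, ← Matrix.mul_assoc, ← transpose_mul,
      nonsing_inv_mul C hC, transpose_one, Matrix.one_mul]
  have hy : C *ᵥ x ≠ 0 := fun h =>
    hx (mulVec_injective_iff_isUnit.mpr ((isUnit_iff_isUnit_det C).mpr hC) (by simpa using h))
  have hdet : (Cᵀ * C + M).det = (Cᵀ * C).det * (1 + S).det := by
    rw [show Cᵀ * C + M = Cᵀ * (1 + S) * C by
        rw [hM_eq, Matrix.mul_add, Matrix.add_mul, Matrix.mul_one]]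
    simp only [det_mul]
    ring
  have h2 : 2 ≤ (1 + S).det := by
    refine hS.two_le_det_one_add hy ?_
    rwa [← Matrix.mul_one Cᵀ, hM_eq, dotProduct_transpose_mul_mul_mulVec,
      dotProduct_transpose_mul_mul_mulVec, one_mulVec] at hxM
  rw [hdet]
  nlinarith

theorem PosDef.two_pow_mul_det_le_det_add_sum {A : Matrix n n ℝ} (hA : A.PosDef) {k : ℕ}
    {M : Fin k → Matrix n n ℝ} (hM : ∀ t, (M t).PosSemidef)
    (hstep : ∀ t, ∃ x ≠ 0, x ⬝ᵥ (A + ∑ j with j < t, M j) *ᵥ x ≤ x ⬝ᵥ M t *ᵥ x) (t : Fin k) :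
    2 ^ ((t : ℕ) + 1) * A.det ≤ (A + ∑ j with j ≤ t, M j).det := by
  set D : ℕ → ℝ := fun m => (A + ∑ j : Fin k with j.val < m, M j).det
  have hD0 : D 0 = A.det := by simp [D]
  have hD (m : ℕ) (hm : m < k) : 2 * D m ≤ D (m + 1) := by
    obtain ⟨x, hx, hxM⟩ := hstep ⟨m, hm⟩
    have hsplit : ∑ j : Fin k with j.val < m + 1, M j =
        ∑ j : Fin k with j.val < m, M j + M ⟨m, hm⟩ := by
      have : univ.filter (fun j : Fin k => j.val < m + 1) =
          insert ⟨m, hm⟩ (univ.filter fun j : Fin k => j.val < m) := by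
        ext j; simp only [mem_filter_univ, mem_insert, Fin.ext_iff]; omega
      rw [this, sum_insert (by simp), add_comm]
    simp only [D, hsplit, ← add_assoc]
    exact (hA.add_posSemidef (posSemidef_sum _ fun j _ => hM j)).two_mul_det_le_det_add
      (hM _) hx hxM
  have := geom_le zero_le_two (t + 1) fun m hm => hD m (by omega)
  simpa [D, hD0, Nat.lt_succ_iff] using this

end Matrix

theorem dmq_det_lower_bound_general
    (d : ℕ) (εt εs lr : ℝ)
    (hεs : 0 < εs) (hle : εs ≤ εt / d) (hlr : 0 < lr)
    (k : ℕ) (M : Fin k → Matrix (Fin d) (Fin d) ℝ)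
    (hpsd : ∀ t, (M t).PosSemidef)
    (hproc : ∀ t : Fin k, ∃ x : Fin d → ℝ,
        εt ≤ x ⬝ᵥ (M t).mulVec x ∧
        x ⬝ᵥ (lr • (1 : Matrix (Fin d) (Fin d) ℝ) +
            ∑ j ∈ Finset.univ.filter (fun j => j < t), M j).mulVec x ≤ εs) :
    ∀ t : Fin k,
      (2 : ℝ) ^ (t : ℕ) * lr ^ d ≤
        (lr • (1 : Matrix (Fin d) (Fin d) ℝ) +
          ∑ j ∈ Finset.univ.filter (fun j => j ≤ t), M j).det := by
  intro t
  -- `εt / 0 = 0` in Lean, so `0 < εs ≤ εt / d` already forces `d ≠ 0`.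
  have hεst : εs ≤ εt := by
    rcases Nat.eq_zero_or_pos d with rfl | hd
    · simp only [CharP.cast_eq_zero, div_zero] at hle; linarith
    · have hd : (1 : ℝ) ≤ d := by exact_mod_cast hd
      nlinarith [(le_div_iff₀ (by linarith)).mp hle]
  have hstep (t : Fin k) :
      ∃ x ≠ 0, x ⬝ᵥ (lr • 1 + ∑ j with j < t, M j) *ᵥ x ≤ x ⬝ᵥ M t *ᵥ x := by
    obtain ⟨x, hxM, hxA⟩ := hproc t
    refine ⟨x, ?_, hxA.trans (hεst.trans hxM)⟩
    rintro rfl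
    simp only [mulVec_zero, dotProduct_zero] at hxM
    linarith
  calc (2 : ℝ) ^ (t : ℕ) * lr ^ d
        ≤ 2 ^ ((t : ℕ) + 1) * (lr • (1 : Matrix (Fin d) (Fin d) ℝ)).det := by
        rw [det_smul, det_one, Fintype.card_fin, mul_one]
        gcongr
        · norm_num
        · omega
    _ ≤ _ := (PosDef.one.smul hlr).two_pow_mul_det_le_det_add_sum hpsd hstep t

/-- **Determinant lower bound in the potential-function lemma.**
If each matrix `M t` (`t` indexed from `0`, corresponding to the `t+1`-st matrix)
admits a direction `x` with `xᵀ M_t x ≥ ε_t` and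
`xᵀ (λ_r I + ∑_{j < t} M j) x ≤ ε_s`, then for every `t`,
`det (λ_r I + ∑_{j ≤ t} M j) ≥ 2 ^ t · λ_r ^ d`  (i.e. `2 ^ (t' - 1) · λ_r ^ d`
for the `t'`-th matrix, `t' = t + 1 ∈ {1, …, k}`). -/
theorem dmq_det_lower_bound
    (d : ℕ) (hd : 1 ≤ d) (εt εs lr : ℝ)
    (hεs : 0 < εs) (hle : εs ≤ εt / d) (hlr : 0 < lr)
    (k : ℕ) (M : Fin k → Matrix (Fin d) (Fin d) ℝ)
    (hpsd : ∀ t, (M t).PosSemidef)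
    (hproc : ∀ t : Fin k, ∃ x : Fin d → ℝ,
        εt ≤ x ⬝ᵥ (M t).mulVec x ∧
        x ⬝ᵥ (lr • (1 : Matrix (Fin d) (Fin d) ℝ) +
            ∑ j ∈ Finset.univ.filter (fun j => j < t), M j).mulVec x ≤ εs) :
    ∀ t : Fin k,
      (2 : ℝ) ^ (t : ℕ) * lr ^ d ≤
        (lr • (1 : Matrix (Fin d) (Fin d) ℝ) +
          ∑ j ∈ Finset.univ.filter (fun j => j ≤ t), M j).det :=
  dmq_det_lower_bound_general d εt εs lr hεs hle hlr k M hpsd hproc
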